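/- (One-step monotonicity of take-max sets in the RNABOX iteration.) Let L ⊊ H with 0 < n − ∑_{h∈L} m_h ≤ ∑_{h∈H\L} M_h, let x** be the unique optimal solution of Problem 2 on the index set H\L with budget n − ∑_{h∈L} m_h, and set U = {h ∈ H\L : x**_h = M_h} and L̃ = {h ∈ H\(L∪U) : x**_h ≤ m_h}. Assume L̃ ≠ ∅ and put L' = L ∪ L̃. If 0 < n − ∑_{h∈L'} m_h ≤ ∑_{h∈H\L'} M_h and x*** is the unique optimal solution of Problem 2 on the index set H\L' with budget n − ∑_{h∈L'} m_h, with U' = {h ∈ H\L' : x***_h = M_h}, then U' ⊆ U. -/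

import Mathlib

/-!
An optimal allocation has the smallest marginal cost `A h ^ 2 / x h ^ 2` at every stratum below
its upper bound: otherwise moving a little sample from a stratum `k` with smaller marginal cost
to such a stratum `g` would lower the objective. Passing from `L` to `L'` removes the strata of
`L̃`, on which `x** ≤ m`, together with the budget `∑_{L̃} m`, so on `H \ L'` the total of `x***`
is at most that of `x**`. If `h₀ ∈ U' \ U`, then `x**_{h₀} < M_{h₀} = x***_{h₀}`, hence
`x***_k < x**_k` for some other `k`, and the marginal costs give the contradictory chain
`A_{h₀}²/x**_{h₀}² ≤ A_k²/x**_k² ≤ A_k²/x***_k² ≤ A_{h₀}²/x***_{h₀}² < A_{h₀}²/x**_{h₀}²`.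
-/

open Finset Filter Topology

section

variable {ι : Type*} [DecidableEq ι]

def transfer (x : ι → ℝ) (g k : ι) (t : ℝ) : ι → ℝ :=
  Function.update (Function.update x g (x g + t)) k (x k - t)

lemma sum_transfer {J : Finset ι} {g k : ι} (hg : g ∈ J) (hk : k ∈ J) (hgk : g ≠ k)
    (F : ι → ℝ → ℝ) (x : ι → ℝ) (t : ℝ) :
    ∑ h ∈ J, F h (transfer x g k t h) =
      ∑ h ∈ J, F h (x h) + (F g (x g + t) - F g (x g)) + (F k (x k - t) - F k (x k)) := by
  have hk' : k ∈ J.erase g := mem_erase.2 ⟨hgk.symm, hk⟩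
  have hrest : ∑ h ∈ (J.erase g).erase k, F h (transfer x g k t h) =
      ∑ h ∈ (J.erase g).erase k, F h (x h) :=
    sum_congr rfl fun h hh => by
      simp [transfer, ne_of_mem_erase hh, ne_of_mem_erase (mem_of_mem_erase hh)]
  rw [← add_sum_erase J _ hg, ← add_sum_erase _ _ hk', hrest,
    ← add_sum_erase J (fun h => F h (x h)) hg, ← add_sum_erase _ (fun h => F h (x h)) hk']
  simp only [transfer, Function.update_self, Function.update_of_ne hgk]
  ring

/-- `x` is the optimal solution of Problem 2 on `J` with budget `b`. -/
structure IsOptimalAllocation (J : Finset ι) (A M : ι → ℝ) (b : ℝ) (x : ι → ℝ) : Prop where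
  pos : ∀ h ∈ J, 0 < x h
  sum_eq : ∑ h ∈ J, x h = b
  le_upper : ∀ h ∈ J, x h ≤ M h
  optimal : ∀ y : ι → ℝ, (∀ h ∈ J, 0 < y h) → ∑ h ∈ J, y h = b → (∀ h ∈ J, y h ≤ M h) →
    ∑ h ∈ J, A h ^ 2 / x h ≤ ∑ h ∈ J, A h ^ 2 / y h

namespace IsOptimalAllocation

variable {J : Finset ι} {A M x : ι → ℝ} {b : ℝ}

lemma transfer_feasible (hx : IsOptimalAllocation J A M b x) {g k : ι} (hg : g ∈ J)
    (hk : k ∈ J) (hgk : g ≠ k) {t : ℝ} (ht₀ : 0 < t) (htM : t < M g - x g) (htx : t < x k) :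
    (∀ h ∈ J, 0 < transfer x g k t h) ∧ ∑ h ∈ J, transfer x g k t h = b ∧
      ∀ h ∈ J, transfer x g k t h ≤ M h := by
  refine ⟨fun h hh => ?_, by rw [sum_transfer hg hk hgk (fun _ v => v), hx.sum_eq]; ring,
    fun h hh => ?_⟩ <;>
  · have := hx.pos h hh
    have := hx.le_upper h hh
    unfold transfer
    rcases eq_or_ne h k with rfl | hhk
    · simp only [Function.update_self]; linarith
    rcases eq_or_ne h g with rfl | hhg
    · simp only [Function.update_of_ne hhk, Function.update_self]; linarith
    simpa only [Function.update_of_ne hhk, Function.update_of_ne hhg]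

lemma sq_div_sq_le_of_lt_upper (hx : IsOptimalAllocation J A M b x) {g k : ι} (hg : g ∈ J)
    (hk : k ∈ J) (hgk : g ≠ k) (hgM : x g < M g) :
    A g ^ 2 / x g ^ 2 ≤ A k ^ 2 / x k ^ 2 := by
  by_contra! hlt
  have hxg := hx.pos g hg
  have hxk := hx.pos k hk
  -- the change of the objective under `transfer x g k t` is `t * φ t`
  set φ : ℝ → ℝ := fun t => A k ^ 2 / ((x k - t) * x k) - A g ^ 2 / ((x g + t) * x g)
  have hφ : ContinuousAt φ 0 := by fun_prop (disch := simp; positivity)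
  have hφ0 : φ 0 < 0 := by simp only [φ]; simpa [← sq] using hlt
  have hsmall : ∀ᶠ t in 𝓝[>] 0, φ t < 0 ∧ 0 < t ∧ t < M g - x g ∧ t < x k := by
    filter_upwards [nhdsWithin_le_nhds (hφ.eventually (gt_mem_nhds hφ0)), self_mem_nhdsWithin,
      nhdsWithin_le_nhds (gt_mem_nhds (sub_pos.2 hgM)), nhdsWithin_le_nhds (gt_mem_nhds hxk)]
      with t h₁ h₂ h₃ h₄
    exact ⟨h₁, h₂, h₃, h₄⟩
  obtain ⟨t, hφt, ht₀, htM, htx⟩ := hsmall.exists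
  obtain ⟨hpos, hsum, hle⟩ := hx.transfer_feasible hg hk hgk ht₀ htM htx
  have hcost := hx.optimal _ hpos hsum hle
  rw [sum_transfer hg hk hgk (fun h v => A h ^ 2 / v)] at hcost
  have hdiff : A g ^ 2 / (x g + t) - A g ^ 2 / x g + (A k ^ 2 / (x k - t) - A k ^ 2 / x k) =
      t * φ t := by
    have : x k - t ≠ 0 := by linarith
    simp only [φ]; field_simp; ring
  linarith [mul_neg_of_pos_of_neg ht₀ hφt]

lemma eq_upper_of_sum_le (hx : IsOptimalAllocation J A M b x) {J' : Finset ι} {b' : ℝ}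
    {x' : ι → ℝ} (hx' : IsOptimalAllocation J' A M b' x') (hJ : J' ⊆ J)
    (hsum : ∑ h ∈ J', x' h ≤ ∑ h ∈ J', x h) {h₀ : ι} (h₀J : h₀ ∈ J') (hA : A h₀ ≠ 0)
    (h₀M : x' h₀ = M h₀) : x h₀ = M h₀ := by
  by_contra hne
  have hlt : x h₀ < x' h₀ := h₀M ▸ (hx.le_upper h₀ (hJ h₀J)).lt_of_ne hne
  obtain ⟨k, hk, hxk⟩ : ∃ k ∈ J'.erase h₀, x' k < x k := by
    apply exists_lt_of_sum_lt
    linarith [add_sum_erase J' x h₀J, add_sum_erase J' x' h₀J]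
  have hkJ' := mem_of_mem_erase hk
  have hk₀ := ne_of_mem_erase hk
  have := hx'.pos k hkJ'
  have := hx.pos h₀ (hJ h₀J)
  refine lt_irrefl (A h₀ ^ 2 / x h₀ ^ 2) ?_
  calc A h₀ ^ 2 / x h₀ ^ 2
      ≤ A k ^ 2 / x k ^ 2 :=
        hx.sq_div_sq_le_of_lt_upper (hJ h₀J) (hJ hkJ') hk₀.symm (h₀M ▸ hlt)
    _ ≤ A k ^ 2 / x' k ^ 2 := by gcongr
    _ ≤ A h₀ ^ 2 / x' h₀ ^ 2 :=
        hx'.sq_div_sq_le_of_lt_upper hkJ' h₀J hk₀ (hxk.trans_le (hx.le_upper k (hJ hkJ')))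
    _ < A h₀ ^ 2 / x h₀ ^ 2 := by gcongr

end IsOptimalAllocation

end

theorem rnabox_takemax_monotone_general {ι : Type*} [DecidableEq ι] (H : Finset ι)
    (A m M : ι → ℝ) (n : ℝ)
    (hA : ∀ h ∈ H, 0 < A h)
    (L : Finset ι)
    -- `x₂` is the (unique) optimal solution of Problem 2 on `H \ L` with budget `n − ∑_L m`:
    (x₂ : ι → ℝ)
    (hx₂pos : ∀ h ∈ H \ L, 0 < x₂ h)
    (hx₂sum : ∑ h ∈ H \ L, x₂ h = n - ∑ h ∈ L, m h)
    (hx₂le : ∀ h ∈ H \ L, x₂ h ≤ M h)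
    (hx₂opt : ∀ y : ι → ℝ, (∀ h ∈ H \ L, 0 < y h) →
      (∑ h ∈ H \ L, y h = n - ∑ h ∈ L, m h) → (∀ h ∈ H \ L, y h ≤ M h) →
      ∑ h ∈ H \ L, (A h) ^ 2 / x₂ h ≤ ∑ h ∈ H \ L, (A h) ^ 2 / y h)
    (U Lt : Finset ι)
    (hU : ∀ h, h ∈ U ↔ h ∈ H \ L ∧ x₂ h = M h)
    (hLt : ∀ h, h ∈ Lt ↔ h ∈ H \ (L ∪ U) ∧ x₂ h ≤ m h)
    (L' : Finset ι) (hL' : L' = L ∪ Lt)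
    -- `x₃` is the (unique) optimal solution of Problem 2 on `H \ L'` with budget `n − ∑_{L'} m`:
    (x₃ : ι → ℝ)
    (hx₃pos : ∀ h ∈ H \ L', 0 < x₃ h)
    (hx₃sum : ∑ h ∈ H \ L', x₃ h = n - ∑ h ∈ L', m h)
    (hx₃le : ∀ h ∈ H \ L', x₃ h ≤ M h)
    (hx₃opt : ∀ y : ι → ℝ, (∀ h ∈ H \ L', 0 < y h) →
      (∑ h ∈ H \ L', y h = n - ∑ h ∈ L', m h) → (∀ h ∈ H \ L', y h ≤ M h) →
      ∑ h ∈ H \ L', (A h) ^ 2 / x₃ h ≤ ∑ h ∈ H \ L', (A h) ^ 2 / y h)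
    (U' : Finset ι)
    (hU' : ∀ h, h ∈ U' ↔ h ∈ H \ L' ∧ x₃ h = M h) :
    U' ⊆ U := by
  subst hL'
  have hx₂ : IsOptimalAllocation (H \ L) A M _ x₂ := ⟨hx₂pos, hx₂sum, hx₂le, hx₂opt⟩
  have hx₃ : IsOptimalAllocation (H \ (L ∪ Lt)) A M _ x₃ := ⟨hx₃pos, hx₃sum, hx₃le, hx₃opt⟩
  have hLtJ : Lt ⊆ H \ L := fun h hh =>
    sdiff_subset_sdiff subset_rfl subset_union_left ((hLt h).1 hh).1
  have hJ : H \ (L ∪ Lt) = (H \ L) \ Lt := sdiff_sdiff_left.symm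
  have hbudget : ∑ h ∈ H \ (L ∪ Lt), x₃ h ≤ ∑ h ∈ H \ (L ∪ Lt), x₂ h := by
    have hLtm : ∑ h ∈ Lt, x₂ h ≤ ∑ h ∈ Lt, m h := sum_le_sum fun h hh => ((hLt h).1 hh).2
    rw [hx₃sum, sum_union (disjoint_sdiff.mono_right hLtJ), hJ]
    linarith [sum_sdiff hLtJ (f := x₂)]
  have hJ' : H \ (L ∪ Lt) ⊆ H \ L := hJ ▸ sdiff_subset
  intro h₀ hh₀
  obtain ⟨h₀J', h₀M⟩ := (hU' h₀).1 hh₀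
  exact (hU h₀).2 ⟨hJ' h₀J',
    hx₂.eq_upper_of_sum_le hx₃ hJ' hbudget h₀J' (hA h₀ (sdiff_subset h₀J')).ne' h₀M⟩

/-- One-step monotonicity of the take-max sets in the RNABOX iteration: the take-max set
`U'` of the next interim one-sided problem is contained in the current take-max set `U`. -/
theorem rnabox_takemax_monotone {ι : Type*} [DecidableEq ι] (H : Finset ι) (hH : H.Nonempty)
    (A m M : ι → ℝ) (n : ℝ)
    (hA : ∀ h ∈ H, 0 < A h) (hm : ∀ h ∈ H, 0 < m h) (hmM : ∀ h ∈ H, m h < M h)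
    (hn₁ : ∑ h ∈ H, m h ≤ n) (hn₂ : n ≤ ∑ h ∈ H, M h)
    (L : Finset ι) (hLH : L ⊂ H)
    (hb₁ : 0 < n - ∑ h ∈ L, m h) (hb₂ : n - ∑ h ∈ L, m h ≤ ∑ h ∈ H \ L, M h)
    -- `x₂` is the (unique) optimal solution of Problem 2 on `H \ L` with budget `n − ∑_L m`:
    (x₂ : ι → ℝ)
    (hx₂pos : ∀ h ∈ H \ L, 0 < x₂ h)
    (hx₂sum : ∑ h ∈ H \ L, x₂ h = n - ∑ h ∈ L, m h)
    (hx₂le : ∀ h ∈ H \ L, x₂ h ≤ M h)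
    (hx₂opt : ∀ y : ι → ℝ, (∀ h ∈ H \ L, 0 < y h) →
      (∑ h ∈ H \ L, y h = n - ∑ h ∈ L, m h) → (∀ h ∈ H \ L, y h ≤ M h) →
      ∑ h ∈ H \ L, (A h) ^ 2 / x₂ h ≤ ∑ h ∈ H \ L, (A h) ^ 2 / y h)
    (U Lt : Finset ι)
    (hU : ∀ h, h ∈ U ↔ h ∈ H \ L ∧ x₂ h = M h)
    (hLt : ∀ h, h ∈ Lt ↔ h ∈ H \ (L ∪ U) ∧ x₂ h ≤ m h)
    (hLtne : Lt.Nonempty)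
    (L' : Finset ι) (hL' : L' = L ∪ Lt)
    (hb₁' : 0 < n - ∑ h ∈ L', m h) (hb₂' : n - ∑ h ∈ L', m h ≤ ∑ h ∈ H \ L', M h)
    -- `x₃` is the (unique) optimal solution of Problem 2 on `H \ L'` with budget `n − ∑_{L'} m`:
    (x₃ : ι → ℝ)
    (hx₃pos : ∀ h ∈ H \ L', 0 < x₃ h)
    (hx₃sum : ∑ h ∈ H \ L', x₃ h = n - ∑ h ∈ L', m h)
    (hx₃le : ∀ h ∈ H \ L', x₃ h ≤ M h)
    (hx₃opt : ∀ y : ι → ℝ, (∀ h ∈ H \ L', 0 < y h) →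
      (∑ h ∈ H \ L', y h = n - ∑ h ∈ L', m h) → (∀ h ∈ H \ L', y h ≤ M h) →
      ∑ h ∈ H \ L', (A h) ^ 2 / x₃ h ≤ ∑ h ∈ H \ L', (A h) ^ 2 / y h)
    (U' : Finset ι)
    (hU' : ∀ h, h ∈ U' ↔ h ∈ H \ L' ∧ x₃ h = M h) :
    U' ⊆ U :=
  rnabox_takemax_monotone_general H A m M n hA L x₂ hx₂pos hx₂sum hx₂le hx₂opt U Lt hU hLt L' hL' x₃
    hx₃pos hx₃sum hx₃le hx₃opt U' hU'
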